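/- arXiv:2302.08700 — 6 statements merged into one kernel-verified Lean document; each statement's English description precedes it below -/
import Mathlib

section
/- Let Q be a Dynkin quiver of finite type with height function ξ and Coxeter element τ_Q adapted to Q. For each vertex i define γ_i^Q = (1 − τ_Q)ϖ_i, where ϖ_i is the i-th fundamental weight. Then γ_i^Q = Σ_{j ∈ B^Q(i)} (Π_{k=1}^{l_j−1} (−⟨h_{p_k^j}, α_{p_{k+1}^j}⟩)) α_j, where B^Q(i) is the set of vertices j admitting a (necessarily unique) directed path p^j = (j = p_1^j → p_2^j → ... → p_{l_j}^j = i) in Q, and the empty product (case j = i) is 1. -/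
/-!
The Dynkin graph of `c` (an edge `u — v` when `c u v ≠ 0`) is a forest: on the vertex set `T` of
a cycle every row of `c` sums over `T` to at most `2 - 1 - 1 = 0`, so the positive definite form
`(d u * c u v)` would be nonpositive on the indicator vector of `T`. Hence the directed path `P j`
from `j` to `i` in `Q` is unique, and its coefficient `x j := pathCoef c (P j)` satisfies
`x k = δ k i - ∑_{k → j} c k j * x j`. In the adapted word `w` every arrow `k → j` has `k` before
`j`, so when the reflections of `τ_Q = s_{w₁} ⋯ s_{wₙ}` are applied to `ϖ i` from the right, the
step at `k` pairs `h k` with `ϖ i - ∑_{j after k} x j • α j` and hence subtracts exactly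
`x k • α k`.
-/

/-- The simple reflection on the weight space associated to the simple root `α i` and the
simple coroot functional `h i`. -/
def srefl {V : Type*} [AddCommGroup V] [Module ℝ V] {ι : Type*}
    (α : ι → V) (h : ι → V →ₗ[ℝ] ℝ) (i : ι) : Function.End V :=
  fun v => v - h i v • α i

/-- Product of the simple reflections along a word. -/
def wprod {V : Type*} [AddCommGroup V] [Module ℝ V] {ι : Type*}
    (α : ι → V) (h : ι → V →ₗ[ℝ] ℝ) (w : List ι) : Function.End V :=
  (w.map (srefl α h)).prod

/-- `IsDirPath arrow p j i`: `p` is a directed path from `j` to `i` along the relation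
`arrow`. -/
def IsDirPath {ι : Type*} (arrow : ι → ι → Prop) (p : List ι) (j i : ι) : Prop :=
  p ≠ [] ∧ p.head? = some j ∧ p.getLast? = some i ∧ List.Chain' arrow p

/-- The coefficient `∏_k (−⟨h_{p_k}, α_{p_{k+1}}⟩)` of a path (the empty product for a
one-vertex path is `1`; the empty list is assigned `0`). -/
def pathCoef {ι : Type*} (c : ι → ι → ℤ) : List ι → ℤ
  | [] => 0
  | [_] => 1
  | a :: b :: rest => (-(c a b)) * pathCoef c (b :: rest)

open Finset

theorem Matrix.PosDef.sum_sum_pos {ι : Type*} [Fintype ι] {M : Matrix ι ι ℝ} (hM : M.PosDef)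
    {T : Finset ι} (hT : T.Nonempty) : 0 < ∑ u ∈ T, ∑ v ∈ T, M u v := by
  classical
  have hx : (fun v => if v ∈ T then (1 : ℝ) else 0) ≠ 0 := by
    obtain ⟨a, ha⟩ := hT
    exact fun h0 => by simpa [ha] using congrFun h0 a
  simpa [dotProduct, Matrix.mulVec, sum_ite_mem, mul_ite, ite_mul] using
    hM.dotProduct_mulVec_pos hx

theorem cartan_row_sum_nonpos {ι : Type*} {c : ι → ι → ℤ} (hdiag : ∀ i, c i i = 2)
    (hoffd : ∀ i j, i ≠ j → c i j ≤ 0) {T : Finset ι} {u v₁ v₂ : ι}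
    (hu : u ∈ T) (hv₁ : v₁ ∈ T) (hv₂ : v₂ ∈ T) (h12 : v₁ ≠ v₂) (hu₁ : u ≠ v₁) (hu₂ : u ≠ v₂)
    (hc₁ : c u v₁ ≠ 0) (hc₂ : c u v₂ ≠ 0) : ∑ v ∈ T, c u v ≤ 0 := by
  classical
  have hsub : {u, v₁, v₂} ⊆ T := by simp [insert_subset_iff, *]
  calc ∑ v ∈ T, c u v ≤ ∑ v ∈ {u, v₁, v₂}, c u v :=
        sum_le_sum_of_subset_of_nonpos' hsub fun v _ hv => hoffd u v (by aesop)
    _ = 2 + c u v₁ + c u v₂ := by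
        rw [sum_insert (by simp [*]), sum_pair h12, hdiag, add_assoc]
    _ ≤ 0 := by have := hoffd u v₁ hu₁; have := hoffd u v₂ hu₂; omega

def dynkinGraph {ι : Type*} (c : ι → ι → ℤ) : SimpleGraph ι :=
  SimpleGraph.fromRel fun u v => c u v ≠ 0

theorem isAcyclic_dynkinGraph {ι : Type*} [Fintype ι] {c : ι → ι → ℤ}
    (hdiag : ∀ i, c i i = 2) (hoffd : ∀ i j, i ≠ j → c i j ≤ 0)
    (hzsym : ∀ i j, c i j = 0 ↔ c j i = 0) {d : ι → ℝ} (hd : ∀ i, 0 < d i)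
    (hpos : Matrix.PosDef (Matrix.of fun i j => d i * (c i j : ℝ))) :
    (dynkinGraph c).IsAcyclic := by
  classical
  intro a p hp
  set T := p.support.toFinset
  have hrow : ∀ u ∈ T, ∑ v ∈ T, c u v ≤ 0 := by
    intro u hu
    obtain ⟨v₁, v₂, h12, hnbr⟩ :=
      Set.ncard_eq_two.mp (hp.ncard_neighborSet_toSubgraph_eq_two (List.mem_toFinset.mp hu))
    have hadj : ∀ v ∈ ({v₁, v₂} : Set ι), v ∈ T ∧ u ≠ v ∧ c u v ≠ 0 := by
      intro v hv
      rw [← hnbr] at hv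
      obtain ⟨huv, hc⟩ := SimpleGraph.fromRel_adj _ _ _ |>.mp hv.adj_sub
      refine ⟨List.mem_toFinset.mpr (p.mem_verts_toSubgraph.mp hv.snd_mem), huv, ?_⟩
      exact hc.elim id fun h h0 => h ((hzsym u v).mp h0)
    obtain ⟨hv₁, hu₁, hc₁⟩ := hadj v₁ (by simp)
    obtain ⟨hv₂, hu₂, hc₂⟩ := hadj v₂ (by simp)
    exact cartan_row_sum_nonpos hdiag hoffd hu hv₁ hv₂ h12 hu₁ hu₂ hc₁ hc₂
  have hT : T.Nonempty := ⟨a, List.mem_toFinset.mpr p.start_mem_support⟩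
  have := hpos.sum_sum_pos hT
  simp only [Matrix.of_apply, ← mul_sum] at this
  refine this.not_ge (sum_nonpos fun u hu => ?_)
  exact mul_nonpos_of_nonneg_of_nonpos (hd u).le (by exact_mod_cast hrow u hu)

theorem SimpleGraph.IsAcyclic.list_eq_of_isChain {V : Type*} {G : SimpleGraph V}
    (hG : G.IsAcyclic) {p q : List V} (hp : p ≠ []) (hq : q ≠ []) (hpn : p.Nodup)
    (hqn : q.Nodup) (hpc : p.IsChain G.Adj) (hqc : q.IsChain G.Adj)
    (hhead : p.head? = q.head?) (hlast : p.getLast? = q.getLast?) : p = q := by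
  rw [List.head?_eq_some_head hp, List.head?_eq_some_head hq, Option.some_inj] at hhead
  rw [List.getLast?_eq_some_getLast hp, List.getLast?_eq_some_getLast hq, Option.some_inj] at hlast
  have := (hG.subsingleton_path _ _).elim
    ⟨(SimpleGraph.Walk.ofSupport p hp hpc).copy hhead hlast, by simpa [Walk.isPath_def]⟩
    ⟨SimpleGraph.Walk.ofSupport q hq hqc, by simpa [Walk.isPath_def]⟩
  simpa using congrArg (fun r => r.1.support) this

section IsDirPath

variable {ι : Type*} {A : ι → ι → Prop} {p : List ι} {a b k x y : ι}

theorem isDirPath_singleton (a : ι) : IsDirPath A [a] a a :=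
  ⟨by simp, rfl, rfl, List.isChain_singleton a⟩

theorem IsDirPath.head_eq {t : List ι} (hp : IsDirPath A (x :: t) a b) : x = a := by
  simpa using hp.2.1

theorem IsDirPath.cons (hk : A k a) (hp : IsDirPath A p a b) : IsDirPath A (k :: p) k b := by
  obtain ⟨hne, hh, hl, hc⟩ := hp
  obtain ⟨x, t, rfl⟩ := List.exists_cons_of_ne_nil hne
  obtain rfl : x = a := by simpa using hh
  exact ⟨by simp, rfl, by simpa [List.getLast?_cons] using hl, List.isChain_cons_cons.mpr ⟨hk, hc⟩⟩

theorem IsDirPath.of_cons_cons {t : List ι} (hp : IsDirPath A (x :: y :: t) a b) :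
    A x y ∧ IsDirPath A (y :: t) y b := by
  obtain ⟨-, -, hl, hc⟩ := hp
  rw [List.Chain', List.isChain_cons_cons] at hc
  exact ⟨hc.1, by simp, rfl, by simpa using hl, hc.2⟩

theorem IsDirPath.eq {β : Type*} [Preorder β] {G : SimpleGraph ι} (hG : G.IsAcyclic)
    {ξ : ι → β} (hAG : ∀ a b, A a b → G.Adj a b) (hξ : ∀ a b, A a b → ξ b < ξ a)
    {q : List ι} (hp : IsDirPath A p a b) (hq : IsDirPath A q a b) : p = q := by
  have : IsTrans ι (fun a b => ξ b < ξ a) := ⟨fun _ _ _ h₁ h₂ => h₂.trans h₁⟩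
  have hnodup : ∀ {r : List ι}, r.IsChain A → r.Nodup := fun hr =>
    (List.isChain_iff_pairwise.mp (hr.imp fun a b h => hξ a b h)).imp
      fun h hab => h.ne' (congrArg ξ hab)
  obtain ⟨hp0, hph, hpl, hpc⟩ := hp
  obtain ⟨hq0, hqh, hql, hqc⟩ := hq
  exact hG.list_eq_of_isChain hp0 hq0 (hnodup hpc) (hnodup hqc) (hpc.imp hAG) (hqc.imp hAG)
    (hph.trans hqh.symm) (hpl.trans hql.symm)

end IsDirPath

theorem pathCoef_eq_sub_sum {ι : Type*} [DecidableEq ι] {A : ι → ι → Prop} {i : ι}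
    {P : ι → List ι} (c : ι → ι → ℤ) (hP : ∀ j p, IsDirPath A p j i → P j = p)
    (hP0 : ∀ j, (¬ ∃ p, IsDirPath A p j i) → P j = []) {k : ι} (S : Finset ι)
    (hS : ∀ j, A k j → j ∈ S) (hSA : ∀ j ∈ S, c k j ≠ 0 → A k j) :
    pathCoef c (P k) = (if k = i then 1 else 0) - ∑ j ∈ S, pathCoef c (P j) * c k j := by
  have hPath : ∀ j, P j ≠ [] → IsDirPath A (P j) j i := fun j hj => by
    obtain ⟨p, hp⟩ : ∃ p, IsDirPath A p j i := by_contra fun h => hj (hP0 j h)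
    rwa [hP j p hp]
  have hPi : P i = [i] := hP i [i] (isDirPath_singleton i)
  have hcons : ∀ j ∈ S, pathCoef c (P j) * c k j ≠ 0 → P j ≠ [] ∧ P k = k :: P j := by
    intro j hj hne
    have hPj : P j ≠ [] := fun h0 => hne (by simp [h0, pathCoef])
    exact ⟨hPj, hP k _ ((hPath j hPj).cons (hSA j hj (right_ne_zero_of_mul hne)))⟩
  rcases hPk : P k with _ | ⟨x, _ | ⟨y, t⟩⟩
  · have hki : k ≠ i := by rintro rfl; simp [hPi] at hPk
    simp [hki, pathCoef, sum_eq_zero fun j hj => not_not.mp fun hne => by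
      simpa [hPk] using (hcons j hj hne).2]
  · have hx := hPath k (by simp [hPk])
    rw [hPk] at hx
    obtain rfl := hx.head_eq.symm
    obtain rfl : k = i := by simpa using hx.2.2.1
    simp [pathCoef, sum_eq_zero fun j hj => not_not.mp fun hne => by
      simpa [hPk, (hcons j hj hne).1] using (hcons j hj hne).2]
  · have hx := hPath k (by simp [hPk])
    rw [hPk] at hx
    obtain rfl := hx.head_eq.symm
    obtain ⟨hky, hy⟩ := hx.of_cons_cons
    have hki : k ≠ i := by rintro rfl; simp [hPi] at hPk
    have hPy : P y = y :: t := hP y _ hy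
    rw [sum_eq_single_of_mem y (hS y hky) fun j hj hjy => not_not.mp fun hne => hjy ?_]
    · simp [hki, pathCoef, hPy]
      ring
    · obtain ⟨hPj, hPkj⟩ := hcons j hj hne
      rw [hPk, List.cons_inj_right] at hPkj
      have hj := hPath j hPj
      rw [← hPkj] at hj
      exact hj.head_eq.symm

theorem wprod_apply_eq_sub_sum {V ι : Type*} [AddCommGroup V] [Module ℝ V] [DecidableEq ι]
    (α : ι → V) (h : ι → V →ₗ[ℝ] ℝ) {w : List ι} (hw : w.Nodup) (v : V) (x : ι → ℝ)
    (hx : ∀ k rest, k :: rest <:+ w → x k = h k v - ∑ j ∈ rest.toFinset, x j * h k (α j)) :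
    wprod α h w v = v - ∑ j ∈ w.toFinset, x j • α j := by
  induction w with
  | nil => exact (sub_zero v).symm
  | cons k rest ih =>
    have hk : k ∉ rest := (List.nodup_cons.mp hw).1
    have hrest := ih (List.nodup_cons.mp hw).2 fun k' rest' hs =>
      hx k' rest' (hs.trans (List.suffix_cons k rest))
    have hxk : h k (wprod α h rest v) = x k := by
      simp [hrest, hx k rest List.suffix_rfl, map_sum, map_smul]
    change wprod α h rest v - h k (wprod α h rest v) • α k = _
    rw [hxk, hrest, List.toFinset_cons, sum_insert (by simpa using hk)]
    abel

theorem List.Nodup.mem_iff_idxOf_lt_of_cons_suffix {α : Type*} [DecidableEq α] {w rest : List α}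
    {k j : α} (hw : w.Nodup) (hs : k :: rest <:+ w) (hj : j ∈ w) :
    j ∈ rest ↔ w.idxOf k < w.idxOf j := by
  obtain ⟨s, rfl⟩ := hs
  grind

theorem stmt4_general {V : Type*} [AddCommGroup V] [Module ℝ V] {ι : Type*} [Fintype ι]
    [DecidableEq ι]
    (c : ι → ι → ℤ)
    (hdiag : ∀ i, c i i = 2)
    (hoffd : ∀ i j, i ≠ j → c i j ≤ 0)
    (hzsym : ∀ i j, c i j = 0 ↔ c j i = 0)
    (d : ι → ℝ) (hd : ∀ i, 0 < d i)
    (hpos : Matrix.PosDef (Matrix.of fun i j => d i * (c i j : ℝ)))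
    (α : ι → V) (h : ι → V →ₗ[ℝ] ℝ) (ϖ : ι → V)
    (hhα : ∀ i j, h i (α j) = (c i j : ℝ))
    (hhϖ : ∀ i j, h i (ϖ j) = if i = j then 1 else 0)
    (ξ : ι → ℤ)
    (hξ : ∀ i j, i ≠ j → c i j ≠ 0 → ξ i = ξ j + 1 ∨ ξ j = ξ i + 1)
    (w : List ι) (hwnd : w.Nodup) (hwall : ∀ i, i ∈ w)
    (hadapt : ∀ i j, i ≠ j → c i j ≠ 0 → ξ i = ξ j + 1 → w.idxOf i < w.idxOf j)
    (i : ι) (P : ι → List ι)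
    (hP : ∀ j, (∃ p, IsDirPath (fun a b => a ≠ b ∧ c a b ≠ 0 ∧ ξ a = ξ b + 1) p j i) →
      IsDirPath (fun a b => a ≠ b ∧ c a b ≠ 0 ∧ ξ a = ξ b + 1) (P j) j i)
    (hP0 : ∀ j, ¬ (∃ p, IsDirPath (fun a b => a ≠ b ∧ c a b ≠ 0 ∧ ξ a = ξ b + 1) p j i) →
      P j = []) :
    ϖ i - wprod α h w (ϖ i) = ∑ j : ι, (pathCoef c (P j) : ℝ) • α j := by
  classical
  have hacyc := isAcyclic_dynkinGraph hdiag hoffd hzsym hd hpos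
  have huniq : ∀ j p, IsDirPath (fun a b => a ≠ b ∧ c a b ≠ 0 ∧ ξ a = ξ b + 1) p j i → P j = p :=
    fun j p hp => (hP j ⟨p, hp⟩).eq hacyc (ξ := ξ)
      (fun a b hab => (SimpleGraph.fromRel_adj _ a b).mpr ⟨hab.1, Or.inl hab.2.1⟩)
      (fun a b hab => by linarith [hab.2.2]) hp
  have hw : w.toFinset = univ :=
    eq_univ_of_forall fun j => List.mem_toFinset.mpr (hwall j)
  rw [wprod_apply_eq_sub_sum α h hwnd (ϖ i) (fun j => (pathCoef c (P j) : ℝ)) ?_, hw,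
    sub_sub_cancel]
  intro k rest hs
  have hrest : ∀ j, j ∈ rest.toFinset ↔ w.idxOf k < w.idxOf j := fun j =>
    List.mem_toFinset.trans (hwnd.mem_iff_idxOf_lt_of_cons_suffix hs (hwall j))
  have hout : ∀ j, k ≠ j ∧ c k j ≠ 0 ∧ ξ k = ξ j + 1 → j ∈ rest.toFinset :=
    fun j hkj => (hrest j).mpr (hadapt k j hkj.1 hkj.2.1 hkj.2.2)
  have hlater : ∀ j ∈ rest.toFinset, c k j ≠ 0 → k ≠ j ∧ c k j ≠ 0 ∧ ξ k = ξ j + 1 := by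
    intro j hj hc
    have hlt := (hrest j).mp hj
    have hne : k ≠ j := by rintro rfl; exact lt_irrefl _ hlt
    refine ⟨hne, hc, (hξ k j hne hc).resolve_right fun hjk => ?_⟩
    exact lt_asymm hlt (hadapt j k hne.symm (fun h0 => hc ((hzsym k j).mpr h0)) hjk)
  simp [pathCoef_eq_sub_sum c huniq hP0 _ hout hlater, hhϖ, hhα]

/-- For a Dynkin quiver `Q` of finite type with height function `ξ` and adapted Coxeter
element `τ_Q`, one has `γ_i^Q = (1 − τ_Q)ϖ_i = ∑_{j ∈ B^Q(i)} (∏ (−⟨h_{p_k^j}, α_{p_{k+1}^j}⟩)) α_j`,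
summing over vertices `j` admitting a directed path `P j` to `i` in `Q`. -/
theorem stmt4 {V : Type*} [AddCommGroup V] [Module ℝ V] {ι : Type*} [Fintype ι]
    [DecidableEq ι]
    (c : ι → ι → ℤ)
    (hdiag : ∀ i, c i i = 2)
    (hoffd : ∀ i j, i ≠ j → c i j ≤ 0)
    (hzsym : ∀ i j, c i j = 0 ↔ c j i = 0)
    (d : ι → ℝ) (hd : ∀ i, 0 < d i)
    (hdc : ∀ i j, d i * (c i j : ℝ) = d j * (c j i : ℝ))
    (hpos : Matrix.PosDef (Matrix.of fun i j => d i * (c i j : ℝ)))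
    (α : ι → V) (h : ι → V →ₗ[ℝ] ℝ) (ϖ : ι → V)
    (hhα : ∀ i j, h i (α j) = (c i j : ℝ))
    (hhϖ : ∀ i j, h i (ϖ j) = if i = j then 1 else 0)
    (ξ : ι → ℤ)
    (hξ : ∀ i j, i ≠ j → c i j ≠ 0 → ξ i = ξ j + 1 ∨ ξ j = ξ i + 1)
    (w : List ι) (hwnd : w.Nodup) (hwall : ∀ i, i ∈ w)
    (hadapt : ∀ i j, i ≠ j → c i j ≠ 0 → ξ i = ξ j + 1 → w.idxOf i < w.idxOf j)
    (i : ι) (P : ι → List ι)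
    (hP : ∀ j, (∃ p, IsDirPath (fun a b => a ≠ b ∧ c a b ≠ 0 ∧ ξ a = ξ b + 1) p j i) →
      IsDirPath (fun a b => a ≠ b ∧ c a b ≠ 0 ∧ ξ a = ξ b + 1) (P j) j i)
    (hP0 : ∀ j, ¬ (∃ p, IsDirPath (fun a b => a ≠ b ∧ c a b ≠ 0 ∧ ξ a = ξ b + 1) p j i) →
      P j = []) :
    ϖ i - wprod α h w (ϖ i) = ∑ j : ι, (pathCoef c (P j) : ℝ) • α j :=
  stmt4_general c hdiag hoffd hzsym d hd hpos α h ϖ hhα hhϖ ξ hξ w hwnd hwall hadapt i P hP hP0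
end

section
/- Let Q be a Dynkin quiver of arbitrary finite type with height function ξ and i a vertex. Then α_i − Σ_{j : d(i,j)=1, ξ_j − ξ_i = 1} c_{j,i} γ_j^Q = γ_i^Q, where γ_k^Q = (1 − τ_Q)ϖ_k and c_{j,i} = ⟨h_j, α_i⟩ are Cartan matrix entries. -/
theorem List.mem_left_iff_idxOf_lt {α : Type*} [BEq α] [LawfulBEq α] {u v : List α} {i k : α}
    (hi : i ∉ u) :
    k ∈ u ↔ (u ++ i :: v).idxOf k < (u ++ i :: v).idxOf i := by
  rw [List.idxOf_append_of_notMem hi, List.idxOf_cons_self]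
  by_cases hku : k ∈ u
  · simpa [hku, List.idxOf_append_of_mem hku] using List.idxOf_lt_length_iff.2 hku
  · simp [hku, List.idxOf_append_of_notMem hku]

section Reflections

variable {V : Type*} [AddCommGroup V] [Module ℝ V] {ι : Type*}
  (α : ι → V) (h : ι → V →ₗ[ℝ] ℝ)

theorem wprod_cons (k : ι) (l : List ι) (x : V) :
    wprod α h (k :: l) x = srefl α h k (wprod α h l x) := rfl

theorem wprod_append (l₁ l₂ : List ι) (x : V) :
    wprod α h (l₁ ++ l₂) x = wprod α h l₁ (wprod α h l₂ x) := by
  simp only [wprod, List.map_append, List.prod_append]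
  rfl

theorem wprod_isLinearMap (l : List ι) : IsLinearMap ℝ (wprod α h l) := by
  induction l with
  | nil => exact ⟨fun _ _ => rfl, fun _ _ => rfl⟩
  | cons k l ih =>
    refine ⟨fun x y => ?_, fun r x => ?_⟩
    · simp only [wprod_cons, ih.map_add, srefl, map_add, add_smul]
      abel
    · simp only [wprod_cons, ih.map_smul, srefl, map_smul, smul_sub, smul_smul, smul_eq_mul]

def wprodLinearMap (l : List ι) : V →ₗ[ℝ] V :=
  IsLinearMap.mk' (wprod α h l) (wprod_isLinearMap α h l)

theorem coe_wprodLinearMap (l : List ι) : ⇑(wprodLinearMap α h l) = wprod α h l := rfl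

theorem wprod_apply_of_forall_mem_eq_zero {l : List ι} {x : V} (hx : ∀ k ∈ l, h k x = 0) :
    wprod α h l x = x := by
  induction l with
  | nil => rfl
  | cons k l ih =>
    rw [wprod_cons, ih fun m hm => hx m (List.mem_cons_of_mem _ hm)]
    simp [srefl, hx k List.mem_cons_self]

variable [DecidableEq ι] {ϖ : ι → V} (hhϖ : ∀ i j, h i (ϖ j) = if i = j then 1 else 0)
include hhϖ

theorem wprod_fundamental_of_notMem {l : List ι} {j : ι} (hj : j ∉ l) :
    wprod α h l (ϖ j) = ϖ j :=
  wprod_apply_of_forall_mem_eq_zero α h fun k hk => by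
    rw [hhϖ, if_neg (fun e : k = j => hj (e ▸ hk))]

-- `x - ∑ₖ ⟨h k, x⟩ ϖ k` is killed by every coroot, hence fixed by every reflection.
theorem sub_wprod_eq_sum [Fintype ι] (l : List ι) (x : V) :
    x - wprod α h l x = ∑ k, h k x • (ϖ k - wprod α h l (ϖ k)) := by
  set y := x - ∑ k, h k x • ϖ k
  have hy : wprod α h l y = y := wprod_apply_of_forall_mem_eq_zero α h fun m _ => by
    simp [y, hhϖ]
  have hτx : wprod α h l x = y + ∑ k, h k x • wprod α h l (ϖ k) := by
    conv_lhs => rw [← sub_add_cancel x (∑ k, h k x • ϖ k)]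
    simp only [← coe_wprodLinearMap, map_add, map_sum, map_smul]
    rw [coe_wprodLinearMap, hy]
  rw [hτx]
  simp only [y, smul_sub, Finset.sum_sub_distrib]
  abel

theorem fundamental_sub_wprod_eq [Fintype ι] {u v : List ι} {i : ι} (hw : (u ++ i :: v).Nodup) :
    ϖ i - wprod α h (u ++ i :: v) (ϖ i) =
      α i - ∑ k ∈ u.toFinset, h k (α i) • (ϖ k - wprod α h (u ++ i :: v) (ϖ k)) := by
  obtain ⟨-, hiv, hdisj⟩ := List.nodup_append.1 hw
  have hiu : i ∉ u := fun hiu => hdisj i hiu i List.mem_cons_self rfl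
  have hτϖ : wprod α h (u ++ i :: v) (ϖ i) = ϖ i - wprod α h u (α i) := by
    rw [wprod_append, wprod_cons, wprod_fundamental_of_notMem α h hhϖ (List.nodup_cons.1 hiv).1]
    simp only [srefl, hhϖ, if_true, one_smul]
    rw [← coe_wprodLinearMap, map_sub, coe_wprodLinearMap,
      wprod_fundamental_of_notMem α h hhϖ hiu]
  have hsum : ∑ k, h k (α i) • (ϖ k - wprod α h u (ϖ k)) =
      ∑ k ∈ u.toFinset, h k (α i) • (ϖ k - wprod α h (u ++ i :: v) (ϖ k)) := by
    rw [← Finset.sum_subset (Finset.subset_univ u.toFinset)]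
    · refine Finset.sum_congr rfl fun k hk => ?_
      have hkiv : k ∉ i :: v := fun hkiv => hdisj k (List.mem_toFinset.1 hk) k hkiv rfl
      rw [wprod_append, wprod_fundamental_of_notMem α h hhϖ hkiv]
    · intro k _ hk
      simp [wprod_fundamental_of_notMem α h hhϖ (mt List.mem_toFinset.2 hk)]
  rw [hτϖ, ← hsum, ← sub_wprod_eq_sum α h hhϖ]
  abel

end Reflections

theorem height_succ_iff_idxOf_lt {ι : Type*} [DecidableEq ι] (c : ι → ι → ℤ)
    (hzsym : ∀ i j, c i j = 0 ↔ c j i = 0) (ξ : ι → ℤ)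
    (hξ : ∀ i j, i ≠ j → c i j ≠ 0 → ξ i = ξ j + 1 ∨ ξ j = ξ i + 1) (w : List ι)
    (hadapt : ∀ i j, i ≠ j → c i j ≠ 0 → ξ i = ξ j + 1 → w.idxOf i < w.idxOf j)
    {i k : ι} (hki : k ≠ i) (hc : c k i ≠ 0) :
    ξ k = ξ i + 1 ↔ w.idxOf k < w.idxOf i := by
  refine ⟨hadapt k i hki hc, fun hlt => ?_⟩
  refine (hξ k i hki hc).resolve_right fun hik => ?_
  have := hadapt i k hki.symm (mt (hzsym i k).1 hc) hik
  omega

theorem stmt5_general {V : Type*} [AddCommGroup V] [Module ℝ V] {ι : Type*} [Fintype ι]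
    [DecidableEq ι]
    (c : ι → ι → ℤ)
    (hzsym : ∀ i j, c i j = 0 ↔ c j i = 0)
    (α : ι → V) (h : ι → V →ₗ[ℝ] ℝ) (ϖ : ι → V)
    (hhα : ∀ i j, h i (α j) = (c i j : ℝ))
    (hhϖ : ∀ i j, h i (ϖ j) = if i = j then 1 else 0)
    (ξ : ι → ℤ)
    (hξ : ∀ i j, i ≠ j → c i j ≠ 0 → ξ i = ξ j + 1 ∨ ξ j = ξ i + 1)
    (w : List ι) (hwnd : w.Nodup) (hwall : ∀ i, i ∈ w)
    (hadapt : ∀ i j, i ≠ j → c i j ≠ 0 → ξ i = ξ j + 1 → w.idxOf i < w.idxOf j)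
    (i : ι) :
    α i - ∑ j ∈ Finset.univ.filter (fun j => j ≠ i ∧ c j i ≠ 0 ∧ ξ j = ξ i + 1),
        (c j i : ℝ) • (ϖ j - wprod α h w (ϖ j)) =
      ϖ i - wprod α h w (ϖ i) := by
  obtain ⟨u, v, rfl⟩ := List.append_of_mem (hwall i)
  have hiu : i ∉ u := fun hiu => List.disjoint_of_nodup_append hwnd hiu List.mem_cons_self
  have hupper : Finset.univ.filter (fun j => j ≠ i ∧ c j i ≠ 0 ∧ ξ j = ξ i + 1) =
      u.toFinset.filter (fun k => c k i ≠ 0) := by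
    ext k
    by_cases hki : k = i
    · simp [hki, hiu]
    simp only [Finset.mem_filter, Finset.mem_univ, List.mem_toFinset, true_and]
    by_cases hc : c k i = 0
    · simp [hc]
    rw [height_succ_iff_idxOf_lt c hzsym ξ hξ _ hadapt hki hc,
      ← List.mem_left_iff_idxOf_lt hiu]
    tauto
  rw [fundamental_sub_wprod_eq α h hhϖ hwnd, hupper, Finset.sum_filter_of_ne]
  · simp only [hhα]
  · intro k _ hk e
    simp [e] at hk

/-- For a Dynkin quiver `Q` of arbitrary finite type with height function `ξ` and adapted
Coxeter element `τ_Q`, setting `γ_k^Q = (1 − τ_Q)ϖ_k`, one has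
`α_i − ∑_{j : d(i,j)=1, ξ_j − ξ_i = 1} c_{j,i} γ_j^Q = γ_i^Q`. -/
theorem stmt5 {V : Type*} [AddCommGroup V] [Module ℝ V] {ι : Type*} [Fintype ι]
    [DecidableEq ι]
    (c : ι → ι → ℤ)
    (hdiag : ∀ i, c i i = 2)
    (hoffd : ∀ i j, i ≠ j → c i j ≤ 0)
    (hzsym : ∀ i j, c i j = 0 ↔ c j i = 0)
    (d : ι → ℝ) (hd : ∀ i, 0 < d i)
    (hdc : ∀ i j, d i * (c i j : ℝ) = d j * (c j i : ℝ))
    (hpos : Matrix.PosDef (Matrix.of fun i j => d i * (c i j : ℝ)))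
    (α : ι → V) (h : ι → V →ₗ[ℝ] ℝ) (ϖ : ι → V)
    (hhα : ∀ i j, h i (α j) = (c i j : ℝ))
    (hhϖ : ∀ i j, h i (ϖ j) = if i = j then 1 else 0)
    (ξ : ι → ℤ)
    (hξ : ∀ i j, i ≠ j → c i j ≠ 0 → ξ i = ξ j + 1 ∨ ξ j = ξ i + 1)
    (w : List ι) (hwnd : w.Nodup) (hwall : ∀ i, i ∈ w)
    (hadapt : ∀ i j, i ≠ j → c i j ≠ 0 → ξ i = ξ j + 1 → w.idxOf i < w.idxOf j)
    (i : ι) :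
    α i - ∑ j ∈ Finset.univ.filter (fun j => j ≠ i ∧ c j i ≠ 0 ∧ ξ j = ξ i + 1),
        (c j i : ℝ) • (ϖ j - wprod α h w (ϖ j)) =
      ϖ i - wprod α h w (ϖ i) :=
  stmt5_general c hzsym α h ϖ hhα hhϖ ξ hξ w hwnd hwall hadapt i
end

section
/- Let C(q,t) be the (q,t)-deformed Cartan matrix of a finite type g, C_t(t) = C(1,t) its specialization at q = 1, D = diag(d_i) the symmetrizing diagonal matrix, and B(t) = C_t(t) D⁻¹. Write the inverse B̃(t) = B(t)⁻¹ over ℚ(t), with Laurent expansion B̃_{i,j}(t) = Σ_u b̃_{i,j}(u) t^u at t = 0. Then b̃_{i,j}(u) = 0 for all u ≤ 0, and b̃_{i,j}(1) = d_i δ_{i,j}. -/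
/-!
Multiplying `B(t) · B̃(t) = 1` out coefficientwise gives a second-order recursion in `u`:
`b̃ᵢₖ(u + 1) = dᵢ (δᵢₖ δᵤ₀ − ∑_{j ≠ i} cᵢⱼ dⱼ⁻¹ b̃ⱼₖ(u)) − b̃ᵢₖ(u − 1)`.
Since the coefficients vanish for `u ≪ 0`, the recursion propagates the vanishing up to
`u = 0`, the first place where the right-hand side `δᵤ₀` is nonzero, and then reads off
`b̃ᵢₖ(1) = dᵢ δᵢₖ`.
-/

open Finset

/-- The coefficient identities expressing `B(t) · B̃(t) = 1`. -/
def IsLeftInverseCoeffs {ι : Type*} [Fintype ι] [DecidableEq ι]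
    (c : ι → ι → ℤ) (d : ι → ℚ) (b : ι → ι → ℤ → ℚ) : Prop :=
  ∀ i k : ι, ∀ u : ℤ,
    (b i k (u - 1) + b i k (u + 1)) / d i +
      ∑ j ∈ univ.erase i, ((c i j : ℚ) / d j) * b j k u =
    if i = k ∧ u = 0 then 1 else 0

namespace IsLeftInverseCoeffs

variable {ι : Type*} [Fintype ι] [DecidableEq ι]
  {c : ι → ι → ℤ} {d : ι → ℚ} {b : ι → ι → ℤ → ℚ}

theorem coeff_add_one (h : IsLeftInverseCoeffs c d b) {i : ι} (hdi : d i ≠ 0) (k : ι) (u : ℤ) :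
    b i k (u + 1) =
      d i * ((if i = k ∧ u = 0 then 1 else 0) -
        ∑ j ∈ univ.erase i, ((c i j : ℚ) / d j) * b j k u) - b i k (u - 1) := by
  rw [← h i k u]
  field_simp
  ring

theorem coeff_add_one_eq_zero (h : IsLeftInverseCoeffs c d b) {i : ι} (hdi : d i ≠ 0) (k : ι)
    {u : ℤ} (hu : u ≠ 0) (hprev : b i k (u - 1) = 0) (hcur : ∀ j, b j k u = 0) :
    b i k (u + 1) = 0 := by
  simp [h.coeff_add_one hdi, hu, hprev, hcur]

theorem coeff_eq_zero_of_nonpos (h : IsLeftInverseCoeffs c d b) (hd : ∀ i, d i ≠ 0)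
    (hlow : ∃ N : ℤ, ∀ i j u, u < N → b i j u = 0) {u : ℤ} (hu : u ≤ 0) (i k : ι) :
    b i k u = 0 := by
  obtain ⟨N, hN⟩ := hlow
  have vanish_below : ∀ n : ℕ, ∀ i k : ι, ∀ u : ℤ, u ≤ 0 → u < N + n → b i k u = 0 := by
    intro n
    induction n with
    | zero => exact fun i k u _ hu => hN i k u (by omega)
    | succ n ih =>
      intro i k u hu hun
      rcases lt_or_ge u (N + n) with hlt | hge
      · exact ih i k u hu hlt
      have := h.coeff_add_one_eq_zero (hd i) k (u := u - 1) (by omega)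
        (ih i k _ (by omega) (by omega)) (fun j => ih j k _ (by omega) (by omega))
      rwa [sub_add_cancel] at this
  exact vanish_below (u - N + 1).toNat i k u hu (by omega)

theorem coeff_one (h : IsLeftInverseCoeffs c d b) (hd : ∀ i, d i ≠ 0)
    (hlow : ∃ N : ℤ, ∀ i j u, u < N → b i j u = 0) (i k : ι) :
    b i k 1 = if i = k then d i else 0 := by
  have hzero : ∀ {u : ℤ}, u ≤ 0 → ∀ j, b j k u = 0 :=
    fun hu j => h.coeff_eq_zero_of_nonpos hd hlow hu j k
  have := h.coeff_add_one (hd i) k 0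
  split_ifs at this ⊢ with hik <;> simp_all

end IsLeftInverseCoeffs

theorem stmt11_general {ι : Type*} [Fintype ι] [DecidableEq ι]
    (c : ι → ι → ℤ) (d : ι → ℚ)
    (hd : ∀ i, 0 < d i)
    (b : ι → ι → ℤ → ℚ)
    (hlow : ∃ N : ℤ, ∀ i j u, u < N → b i j u = 0)
    (hBinv : ∀ i k : ι, ∀ u : ℤ,
      (b i k (u - 1) + b i k (u + 1)) / d i +
        ∑ j ∈ Finset.univ.erase i, ((c i j : ℚ) / d j) * b j k u =
      if i = k ∧ u = 0 then 1 else 0) :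
    (∀ i j : ι, ∀ u : ℤ, u ≤ 0 → b i j u = 0) ∧
    (∀ i j : ι, b i j 1 = if i = j then d i else 0) := by
  have hB : IsLeftInverseCoeffs c d b := hBinv
  have hd₀ : ∀ i, d i ≠ 0 := fun i => (hd i).ne'
  exact ⟨fun i j _ hu => hB.coeff_eq_zero_of_nonpos hd₀ hlow hu i j, hB.coeff_one hd₀ hlow⟩

/-- Let `C` be a finite-type Cartan matrix with symmetrizer `D = diag(dᵢ)`, and let
`B̃(t) = (C_t(t) D⁻¹)⁻¹` where `C_t(t) = C(1,t)` is the `t`-quantized Cartan matrix.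
The Laurent expansion coefficients `b̃ᵢⱼ(u)` of `B̃ᵢⱼ(t)` at `t = 0` (characterized by the
two-sided convolution identities below together with boundedness of the support from
below) satisfy `b̃ᵢⱼ(u) = 0` for `u ≤ 0` and `b̃ᵢⱼ(1) = dᵢ δᵢⱼ`. -/
theorem stmt11 {ι : Type*} [Fintype ι] [DecidableEq ι] [Nonempty ι]
    (c : ι → ι → ℤ) (d : ι → ℚ)
    (hdiag : ∀ i, c i i = 2)
    (hoffd : ∀ i j, i ≠ j → c i j ≤ 0)
    (hzsym : ∀ i j, c i j = 0 ↔ c j i = 0)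
    (hd : ∀ i, 0 < d i)
    (hdc : ∀ i j, d i * (c i j : ℚ) = d j * (c j i : ℚ))
    (hpos : Matrix.PosDef (Matrix.of fun i j => ((d i : ℝ) * (c i j : ℝ))))
    (b : ι → ι → ℤ → ℚ)
    (hlow : ∃ N : ℤ, ∀ i j u, u < N → b i j u = 0)
    (hBinv : ∀ i k : ι, ∀ u : ℤ,
      (b i k (u - 1) + b i k (u + 1)) / d i +
        ∑ j ∈ Finset.univ.erase i, ((c i j : ℚ) / d j) * b j k u =
      if i = k ∧ u = 0 then 1 else 0)
    (hinvB : ∀ i k : ι, ∀ u : ℤ,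
      (b i k (u - 1) + b i k (u + 1)) / d k +
        ∑ j ∈ Finset.univ.erase k, b i j u * ((c j k : ℚ) / d k) =
      if i = k ∧ u = 0 then 1 else 0) :
    (∀ i j : ι, ∀ u : ℤ, u ≤ 0 → b i j u = 0) ∧
    (∀ i j : ι, b i j 1 = if i = j then d i else 0) :=
  stmt11_general c d hd b hlow hBinv
end

section
/- For the Dynkin diagram of type A_n with Coxeter number h = n+1, the polynomials δ̃_{i,j}(t) (truncation of the inverse of the t-quantized Cartan matrix) are given explicitly by δ̃_{i,j}(t) = Σ_{s=1}^{min(i,j,n+1−i,n+1−j)} t^{|i−j|+2s−1} for all 1 ≤ i, j ≤ n. -/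
/-- The Cartan matrix of type `Aₙ` (1-based indices `1, …, n`). -/
def cA (i j : ℕ) : ℤ :=
  if i = j then 2 else if i + 1 = j ∨ j + 1 = i then -1 else 0

/-- Candidate closed form for the coefficients of the inverse of the `t`-quantized
Cartan matrix of type `Aₙ`, valid in degrees `u ≤ n + 1`. -/
def Fc (n : ℕ) (i k u : ℤ) : ℚ :=
  if (i - k + 1 ≤ u ∧ k - i + 1 ≤ u ∧ u ≤ i + k - 1 ∧ u ≤ 2*((n:ℤ)+1) - i - k - 1
      ∧ (u + i + k) % 2 = 1) then 1 else 0

lemma Fc_nonpos {n : ℕ} {i k u : ℤ} (h : u ≤ 0) : Fc n i k u = 0 := by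
  unfold Fc; rw [if_neg]; omega

lemma Fc_left {n : ℕ} {k u : ℤ} : Fc n 0 k u = 0 := by
  unfold Fc; rw [if_neg]; omega

lemma Fc_right {n : ℕ} {k u : ℤ} : Fc n ((n:ℤ)+1) k u = 0 := by
  unfold Fc; rw [if_neg]; omega

lemma Fc_key (n : ℕ) (i k : ℤ) (hi : 1 ≤ i) (hi' : i ≤ n) (hk : 1 ≤ k) (hk' : k ≤ n)
    (v : ℤ) (hv : v ≤ n) :
    Fc n i k (v+1) + Fc n i k (v-1) - Fc n (i-1) k v - Fc n (i+1) k v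
      = if i = k ∧ v = 0 then 1 else 0 := by
  unfold Fc
  split_ifs <;> first | (exfalso; omega) | norm_num

lemma sum_cA (n : ℕ) (i : ℕ) (hi : i ∈ Finset.Icc 1 n) (g : ℕ → ℚ) :
    ∑ j ∈ (Finset.Icc 1 n).erase i, (cA i j : ℚ) * g j
      = -((if 2 ≤ i then g (i-1) else 0) + (if i + 1 ≤ n then g (i+1) else 0)) := by
  rw [Finset.mem_Icc] at hi
  have hcongr : ∀ j ∈ (Finset.Icc 1 n).erase i, (cA i j : ℚ) * g j
      = (if j = i - 1 then -g (i-1) else 0) + (if j = i + 1 then -g (i+1) else 0) := by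
    intro j hj
    simp only [Finset.mem_erase, Finset.mem_Icc] at hj
    by_cases h1 : j = i - 1
    · subst h1
      rw [if_pos rfl, if_neg (by omega)]
      have hc : cA i (i-1) = -1 := by unfold cA; rw [if_neg (by omega), if_pos (by omega)]
      rw [hc]; push_cast; ring
    · by_cases h2 : j = i + 1
      · subst h2
        rw [if_neg h1, if_pos rfl]
        have hc : cA i (i+1) = -1 := by unfold cA; rw [if_neg (by omega), if_pos (by omega)]
        rw [hc]; push_cast; ring
      · rw [if_neg h1, if_neg h2]
        have hc : cA i j = 0 := by unfold cA; rw [if_neg (by omega), if_neg (by omega)]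
        rw [hc]; norm_num
  rw [Finset.sum_congr rfl hcongr, Finset.sum_add_distrib,
    Finset.sum_ite_eq' _ (i-1) (fun _ => -g (i-1)),
    Finset.sum_ite_eq' _ (i+1) (fun _ => -g (i+1))]
  have m1 : (i - 1 ∈ (Finset.Icc 1 n).erase i) ↔ 2 ≤ i := by
    simp only [Finset.mem_erase, Finset.mem_Icc]; omega
  have m2 : (i + 1 ∈ (Finset.Icc 1 n).erase i) ↔ i + 1 ≤ n := by
    simp only [Finset.mem_erase, Finset.mem_Icc]; omega
  by_cases c1 : 2 ≤ i <;> by_cases c2 : i + 1 ≤ n <;>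
    simp [m1, m2, c1, c2] <;> ring

lemma aux_sum (d : ℤ) (M : ℕ) (u : ℤ) :
    (∑ s ∈ Finset.Icc 1 M, if u = d + 2 * (s:ℤ) - 1 then (1:ℚ) else 0)
      = if d + 1 ≤ u ∧ u ≤ d + 2 * (M:ℤ) - 1 ∧ (u - d) % 2 = 1 then 1 else 0 := by
  by_cases h : d + 1 ≤ u ∧ u ≤ d + 2 * (M:ℤ) - 1 ∧ (u - d) % 2 = 1
  · rw [if_pos h]
    obtain ⟨s0, hs1, hs2, hs3⟩ :
        ∃ s0 : ℕ, 1 ≤ s0 ∧ s0 ≤ M ∧ u = d + 2 * (s0:ℤ) - 1 :=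
      ⟨((u - d + 1)/2).toNat, by omega, by omega, by omega⟩
    rw [Finset.sum_eq_single_of_mem s0 (Finset.mem_Icc.mpr ⟨hs1, hs2⟩)]
    · rw [if_pos hs3]
    · intro s hs hne
      rw [Finset.mem_Icc] at hs
      rw [if_neg]
      intro hcon
      exact hne (by omega)
  · rw [if_neg h]
    apply Finset.sum_eq_zero
    intro s hs
    rw [Finset.mem_Icc] at hs
    rw [if_neg]
    intro hcon
    exact h ⟨by omega, by omega, by omega⟩

/-- For type `Aₙ` (Coxeter number `h = n + 1`), the polynomials
`δ̃ᵢⱼ(t) = ∑_{u=1}^{h} b̃ᵢⱼ(u) tᵘ` (truncation of the inverse of the `t`-quantized Cartan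
matrix, whose Laurent coefficients `b̃` are characterized by the convolution identities
below and lower-bounded support) are given by
`δ̃ᵢⱼ(t) = ∑_{s=1}^{min(i,j,n+1−i,n+1−j)} t^{|i−j|+2s−1}`. -/
theorem stmt15 (n : ℕ) (hn : 1 ≤ n)
    (b : ℕ → ℕ → ℤ → ℚ)
    (hlow : ∃ N : ℤ, ∀ i j u, u < N → b i j u = 0)
    (h1 : ∀ i ∈ Finset.Icc 1 n, ∀ k ∈ Finset.Icc 1 n, ∀ u : ℤ,
      (b i k (u - 1) + b i k (u + 1)) +
        ∑ j ∈ (Finset.Icc 1 n).erase i, (cA i j : ℚ) * b j k u =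
      if i = k ∧ u = 0 then 1 else 0)
    (h2 : ∀ i ∈ Finset.Icc 1 n, ∀ k ∈ Finset.Icc 1 n, ∀ u : ℤ,
      (b i k (u - 1) + b i k (u + 1)) +
        ∑ j ∈ (Finset.Icc 1 n).erase k, b i j u * (cA j k : ℚ) =
      if i = k ∧ u = 0 then 1 else 0) :
    ∀ i ∈ Finset.Icc 1 n, ∀ j ∈ Finset.Icc 1 n, ∀ u : ℤ, 1 ≤ u → u ≤ (n : ℤ) + 1 →
      b i j u = ∑ s ∈ Finset.Icc 1 (min (min i j) (min (n + 1 - i) (n + 1 - j))),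
        if u = |(i : ℤ) - (j : ℤ)| + 2 * (s : ℤ) - 1 then 1 else 0 := by
  obtain ⟨N, hN⟩ := hlow
  -- b vanishes in nonpositive degrees
  have hz : ∀ m : ℕ, ∀ i ∈ Finset.Icc 1 n, ∀ k ∈ Finset.Icc 1 n, ∀ u : ℤ,
      u ≤ 0 → u < N + m → b i k u = 0 := by
    intro m
    induction m with
    | zero => intro i _ k _ u _ hum; exact hN i k u (by omega)
    | succ m ih =>
      intro i hi k hk u hu0 hum
      rcases lt_or_ge u (N + m) with h | h
      · exact ih i hi k hk u hu0 h
      · have heq := h1 i hi k hk (u - 1)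
        rw [if_neg (by omega)] at heq
        have e1 : b i k (u - 1 - 1) = 0 := ih i hi k hk _ (by omega) (by omega)
        have e2 : ∀ j ∈ (Finset.Icc 1 n).erase i, (cA i j : ℚ) * b j k (u-1) = 0 := by
          intro j hj
          rw [ih j (Finset.mem_of_mem_erase hj) k hk (u-1) (by omega) (by omega), mul_zero]
        rw [Finset.sum_eq_zero e2, e1] at heq
        have huu : u - 1 + 1 = u := by ring
        rw [huu] at heq
        linarith
  have hzero : ∀ i ∈ Finset.Icc 1 n, ∀ k ∈ Finset.Icc 1 n, ∀ u : ℤ, u ≤ 0 → b i k u = 0 :=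
    fun i hi k hk u hu => hz (u + 1 - N).toNat i hi k hk u hu (by omega)
  -- the main inductive determination of b
  have main : ∀ m : ℕ, m ≤ n + 1 → ∀ i ∈ Finset.Icc 1 n, ∀ k ∈ Finset.Icc 1 n,
      ∀ u : ℤ, u ≤ (m:ℤ) → b i k u = Fc n i k u := by
    intro m
    induction m with
    | zero =>
      intro _ i hi k hk u hu
      rw [hzero i hi k hk u (by exact_mod_cast hu), Fc_nonpos (by exact_mod_cast hu)]
    | succ m ih =>
      intro hm i hi k hk u hu
      have hm' : m ≤ n + 1 := by omega
      rcases lt_or_ge u ((m:ℤ) + 1) with h | h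
      · exact ih hm' i hi k hk u (by omega)
      · have hu' : u = (m:ℤ) + 1 := by push_cast at hu; omega
        subst hu'
        obtain ⟨hi1, hi2⟩ := Finset.mem_Icc.mp hi
        obtain ⟨hk1, hk2⟩ := Finset.mem_Icc.mp hk
        have heq := h1 i hi k hk (m:ℤ)
        have hsum : ∑ j ∈ (Finset.Icc 1 n).erase i, (cA i j : ℚ) * b j k (m:ℤ)
            = -((if 2 ≤ i then b (i-1) k (m:ℤ) else 0)
                + (if i + 1 ≤ n then b (i+1) k (m:ℤ) else 0)) :=
          sum_cA n i hi _
        rw [hsum] at heq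
        have key := Fc_key n i k (by exact_mod_cast hi1) (by exact_mod_cast hi2)
          (by exact_mod_cast hk1) (by exact_mod_cast hk2) (m:ℤ) (by omega)
        have e0 : b i k ((m:ℤ) - 1) = Fc n i k ((m:ℤ) - 1) :=
          ih hm' i hi k hk _ (by omega)
        have E1 : (if 2 ≤ i then b (i-1) k (m:ℤ) else 0) = Fc n ((i:ℤ)-1) k (m:ℤ) := by
          split_ifs with hg
          · rw [ih hm' (i-1) (Finset.mem_Icc.mpr ⟨by omega, by omega⟩) k hk (m:ℤ) (by omega)]
            congr 1
            omega
          · have hone : (i:ℤ) - 1 = 0 := by omega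
            rw [hone, Fc_left]
        have E2 : (if i + 1 ≤ n then b (i+1) k (m:ℤ) else 0) = Fc n ((i:ℤ)+1) k (m:ℤ) := by
          split_ifs with hg
          · rw [ih hm' (i+1) (Finset.mem_Icc.mpr ⟨by omega, hg⟩) k hk (m:ℤ) (by omega)]
            push_cast
            ring_nf
          · have hone : (i:ℤ) + 1 = (n:ℤ) + 1 := by omega
            rw [hone, Fc_right]
        rw [E1, E2, e0] at heq
        have hiff : ((i:ℤ) = (k:ℤ) ∧ (m:ℤ) = 0) ↔ (i = k ∧ (m:ℤ) = 0) := by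
          constructor <;> intro hx <;> exact ⟨by exact_mod_cast hx.1, hx.2⟩
        rw [if_congr hiff rfl rfl] at key
        linarith
  -- conclude
  intro i hi j hj u hu1 hu2
  obtain ⟨hi1, hi2⟩ := Finset.mem_Icc.mp hi
  obtain ⟨hj1, hj2⟩ := Finset.mem_Icc.mp hj
  rw [main (n+1) le_rfl i hi j hj u (by push_cast; omega)]
  rw [aux_sum]
  unfold Fc
  rcases abs_cases ((i:ℤ) - (j:ℤ)) with ⟨he, hsign⟩ | ⟨he, hsign⟩ <;> rw [he] <;>
    exact if_congr (by omega) rfl rfl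
end

section
/- For types B_n and C_n with Coxeter number h = 2n, the polynomials δ̃_{i,j}(t) obtained from the inverse of B(t) = C_t(t)D⁻¹ are given by δ̃_{i,j}(t) = max(d_i, d_j) Σ_{s=1}^{min(i,j)} ( t^{|i−j|+2s−1} + [max(i,j) < n] t^{2n−i−j+2s−1} ), where [P] is 1 if P holds and 0 otherwise, and (d_1,...,d_n) = (2,...,2,1) in type B_n and (1,...,1,2) in type C_n. -/
/-!
The equations can be solved for `b i k (u + 1)` in terms of the values at `u` and `u - 1`, so
together with the vanishing of `b` for very negative `u` they determine `b`; it suffices to check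
that the closed form satisfies the same recurrence for `u < 2n` and vanishes for `u ≤ 0`. The
closed form is `max(dᵢ, dₖ)` times the indicator of the light cone `|i - k| < u < i + k` (of the
right parity) issuing from `(k, 0)`, plus its reflection in the wall at `n`. For this indicator
every row of the recurrence is a multiple of a discrete wave equation, in which the reflection
shows up as a weight `2` on the edge from `n - 1` to `n` (if `k < n`) or from `n` to `n - 1`
(if `k = n`).
-/

/-- The Cartan matrix of type `Bₙ` (1-based indices `1, …, n`, with `αₙ` the short simple
root, so `c_{n,n−1} = −2`). -/
def cBmat (n i j : ℕ) : ℤ :=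
  if i = j then 2
  else if i = n ∧ j + 1 = n then -2
  else if i + 1 = j ∨ j + 1 = i then -1
  else 0

/-- The Cartan matrix of type `Cₙ` (transpose of that of `Bₙ`). -/
def cCmat (n i j : ℕ) : ℤ := cBmat n j i

/-- The symmetrizer of type `Bₙ`: `(d₁, …, dₙ) = (2, …, 2, 1)`. -/
def dBvec (n i : ℕ) : ℚ := if i = n then 1 else 2

/-- The symmetrizer of type `Cₙ`: `(d₁, …, dₙ) = (1, …, 1, 2)`. -/
def dCvec (n i : ℕ) : ℚ := if i = n then 2 else 1

open Finset

theorem eq_of_recurrence {ι K : Type*} [DecidableEq ι] [DivisionRing K] {S : Finset ι}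
    {d : ι → K} (hd : ∀ i ∈ S, d i ≠ 0) (a : ι → ι → K) (r : ι → ℤ → K) {f g : ι → ℤ → K}
    {N M : ℤ}
    (hf : ∀ i ∈ S, ∀ u < M,
      (f i (u - 1) + f i (u + 1)) / d i + ∑ j ∈ S.erase i, a i j * f j u = r i u)
    (hg : ∀ i ∈ S, ∀ u < M,
      (g i (u - 1) + g i (u + 1)) / d i + ∑ j ∈ S.erase i, a i j * g j u = r i u)
    (hfg : ∀ i ∈ S, ∀ u < N, f i u = g i u) :
    ∀ i ∈ S, ∀ u ≤ M, f i u = g i u := by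
  suffices h : ∀ m : ℕ, ∀ i ∈ S, ∀ u < N + m, u ≤ M → f i u = g i u from
    fun i hi u hu => h (u - N + 1).toNat i hi u (by omega) hu
  intro m
  induction m with
  | zero => exact fun i hi u hu _ => hfg i hi u (by simpa using hu)
  | succ m ih =>
    intro i hi u hu huM
    by_cases hum : u < N + m
    · exact ih i hi u hum huM
    have hsum :
        ∑ j ∈ S.erase i, a i j * f j (u - 1) = ∑ j ∈ S.erase i, a i j * g j (u - 1) :=
      sum_congr rfl fun j hj => by rw [ih j (mem_of_mem_erase hj) _ (by omega) (by omega)]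
    have h := (hf i hi (u - 1) (by omega)).trans (hg i hi (u - 1) (by omega)).symm
    rw [hsum, add_left_inj, div_left_inj' (hd i hi), ih i hi _ (by omega) (by omega),
      add_right_inj, sub_add_cancel] at h
    exact h

theorem sum_erase_Icc_eq_of_tridiagonal {M : Type*} [AddCommMonoid M] {n i : ℕ}
    (hi : i ∈ Icc 1 n) (g : ℕ → M) (h0 : g 0 = 0)
    (hg : ∀ j ∈ Icc 1 n, j + 1 ≠ i → j ≠ i → j ≠ i + 1 → g j = 0) :
    ∑ j ∈ (Icc 1 n).erase i, g j = g (i - 1) + if i < n then g (i + 1) else 0 := by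
  rw [mem_Icc] at hi
  have hg' : ∀ j ∈ (Icc 1 n).erase i, j ≠ i - 1 ∧ j ≠ i + 1 → g j = 0 := by
    intro j hj hne
    rw [mem_erase] at hj
    exact hg j hj.2 (by omega) hj.1 hne.2
  have h0' : i - 1 ∉ (Icc 1 n).erase i → g (i - 1) = 0 := by
    intro h
    rw [show i - 1 = 0 by simp at h; omega, h0]
  split_ifs with hin
  · exact sum_eq_add _ _ (by omega) hg' h0' (by simp; omega)
  · rw [add_zero]
    exact sum_eq_single _ (fun j hj hne => hg' j hj ⟨hne, by simp at hj; omega⟩) h0'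

theorem sum_Icc_ite_eq_add_two_mul_sub_one (m : ℕ) (a u : ℤ) :
    (∑ s ∈ Icc 1 m, if u = a + 2 * (s : ℤ) - 1 then (1 : ℚ) else 0) =
      if a < u ∧ u < a + 2 * m ∧ (u - a) % 2 = 1 then 1 else 0 := by
  induction m with
  | zero => rw [Icc_eq_empty (by omega), sum_empty, if_neg (by omega)]
  | succ m ih =>
    rw [sum_Icc_succ_top (by omega), ih]
    push_cast
    split_ifs <;> first | (exfalso; omega) | norm_num

theorem cBmat_eq_zero {n i j : ℕ} (h₁ : j + 1 ≠ i) (h₂ : j ≠ i) (h₃ : j ≠ i + 1) :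
    cBmat n i j = 0 := by
  unfold cBmat; rw [if_neg (by omega), if_neg (by omega), if_neg (by omega)]

theorem cCmat_eq_zero {n i j : ℕ} (h₁ : j + 1 ≠ i) (h₂ : j ≠ i) (h₃ : j ≠ i + 1) :
    cCmat n i j = 0 :=
  cBmat_eq_zero (by omega) (by omega) (by omega)

theorem cBmat_pred {n i : ℕ} (hi : 1 ≤ i) : cBmat n i (i - 1) = if i = n then -2 else -1 := by
  unfold cBmat; split_ifs <;> omega

theorem cBmat_succ (n i : ℕ) : cBmat n i (i + 1) = -1 := by
  unfold cBmat; split_ifs <;> omega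

theorem cCmat_pred {n i : ℕ} (hi : 1 ≤ i) : cCmat n i (i - 1) = -1 := by
  unfold cCmat cBmat; split_ifs <;> omega

theorem cCmat_succ (n i : ℕ) : cCmat n i (i + 1) = if i + 1 = n then -2 else -1 := by
  unfold cCmat cBmat; split_ifs <;> omega

theorem dBvec_of_ne {n i : ℕ} (h : i ≠ n) : dBvec n i = 2 := if_neg h

theorem dBvec_self (n : ℕ) : dBvec n n = 1 := if_pos rfl

theorem dCvec_of_ne {n i : ℕ} (h : i ≠ n) : dCvec n i = 1 := if_neg h

theorem dCvec_self (n : ℕ) : dCvec n n = 2 := if_pos rfl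

theorem max_dBvec_of_ne {n i : ℕ} (k : ℕ) (h : i ≠ n) : max (dBvec n i) (dBvec n k) = 2 := by
  unfold dBvec; rw [if_neg h]; split_ifs <;> norm_num

theorem max_dBvec_self (n k : ℕ) : max (dBvec n n) (dBvec n k) = dBvec n k := by
  unfold dBvec; rw [if_pos rfl]; split_ifs <;> norm_num

theorem max_dCvec_of_ne {n i : ℕ} (k : ℕ) (h : i ≠ n) :
    max (dCvec n i) (dCvec n k) = dCvec n k := by
  unfold dCvec; rw [if_neg h]; split_ifs <;> norm_num

theorem max_dCvec_self (n k : ℕ) : max (dCvec n n) (dCvec n k) = 2 := by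
  unfold dCvec; rw [if_pos rfl]; split_ifs <;> norm_num

def cone (i k : ℕ) (u : ℤ) : ℚ :=
  if (i : ℤ) - k < u ∧ (k : ℤ) - i < u ∧ u < (i : ℤ) + k ∧ (u + i + k) % 2 = 1 then 1 else 0

-- For `i, k < n` this is `cone (2 * n - i) k u * cone i (2 * n - k) u`.
def mirrorCone (n i k : ℕ) (u : ℤ) : ℚ :=
  if i < n ∧ k < n ∧ 2 * (n : ℤ) - i - k < u ∧ u + i - k < 2 * (n : ℤ) ∧
      u + k - i < 2 * (n : ℤ) ∧ (u + i + k) % 2 = 1 then 1 else 0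

theorem cone_zero_left (k : ℕ) (u : ℤ) : cone 0 k u = 0 := by
  unfold cone; rw [if_neg (by omega)]

theorem mirrorCone_zero_left (n k : ℕ) (u : ℤ) : mirrorCone n 0 k u = 0 := by
  unfold mirrorCone; rw [if_neg (by omega)]

theorem mirrorCone_of_le_left {n i : ℕ} (k : ℕ) (u : ℤ) (hi : n ≤ i) :
    mirrorCone n i k u = 0 := by
  unfold mirrorCone; rw [if_neg (by omega)]

theorem mirrorCone_of_le_right {n k : ℕ} (i : ℕ) (u : ℤ) (hk : n ≤ k) :
    mirrorCone n i k u = 0 := by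
  unfold mirrorCone; rw [if_neg (by omega)]

theorem cone_sub_one_add_cone_add_one {i : ℕ} (k : ℕ) (u : ℤ) (hi : 1 ≤ i) :
    cone i k (u - 1) + cone i k (u + 1) =
      cone (i - 1) k u + cone (i + 1) k u + if i = k ∧ u = 0 then 1 else 0 := by
  unfold cone
  split_ifs <;> first | (exfalso; omega) | norm_num

theorem mirrorCone_sub_one_add_mirrorCone_add_one {n i k : ℕ} {u : ℤ} (hi : 1 ≤ i)
    (hin : i + 1 < n) (hu : u < 2 * n) :
    mirrorCone n i k (u - 1) + mirrorCone n i k (u + 1) =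
      mirrorCone n (i - 1) k u + mirrorCone n (i + 1) k u := by
  unfold mirrorCone
  split_ifs <;> first | (exfalso; omega) | norm_num

theorem mirrorCone_sub_one_add_mirrorCone_add_one_of_succ_eq {n i k : ℕ} {u : ℤ}
    (hin : i + 1 = n) (hkn : k < n) (hu : u < 2 * n) :
    mirrorCone n i k (u - 1) + mirrorCone n i k (u + 1) =
      mirrorCone n (i - 1) k u + cone n k u := by
  unfold cone mirrorCone
  split_ifs <;> first | (exfalso; omega) | norm_num

theorem cone_sub_one_add_cone_add_one_self {n k : ℕ} {u : ℤ} (hk : 1 ≤ k) (hkn : k ≤ n)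
    (hu : u < 2 * n) :
    cone n k (u - 1) + cone n k (u + 1) =
      (if k = n then 2 else 1) * cone (n - 1) k u + mirrorCone n (n - 1) k u +
        if n = k ∧ u = 0 then 1 else 0 := by
  unfold cone mirrorCone
  split_ifs <;> first | (exfalso; omega) | norm_num

def foldedCone (n i k : ℕ) (u : ℤ) : ℚ := cone i k u + mirrorCone n i k u

theorem foldedCone_zero_left (n k : ℕ) (u : ℤ) : foldedCone n 0 k u = 0 := by
  rw [foldedCone, cone_zero_left, mirrorCone_zero_left, add_zero]

theorem foldedCone_of_nonpos (n i k : ℕ) {u : ℤ} (hu : u ≤ 0) : foldedCone n i k u = 0 := by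
  rw [foldedCone, cone, mirrorCone, if_neg (by omega), if_neg (by omega), add_zero]

theorem foldedCone_sub_one_add_foldedCone_add_one {n i k : ℕ} {u : ℤ} (hi : i ∈ Icc 1 n)
    (hk : k ∈ Icc 1 n) (hu : u < 2 * n) :
    foldedCone n i k (u - 1) + foldedCone n i k (u + 1) =
      (if i = n ∧ k = n then 2 else 1) * foldedCone n (i - 1) k u +
        (if i < n then (if i + 1 = n ∧ k ≠ n then 2 else 1) * foldedCone n (i + 1) k u else 0) +
        if i = k ∧ u = 0 then 1 else 0 := by
  rw [mem_Icc] at hi hk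
  have hcone := cone_sub_one_add_cone_add_one k u hi.1
  simp only [foldedCone]
  obtain h | h | rfl : i + 1 < n ∨ i + 1 = n ∨ i = n := by omega
  · have := mirrorCone_sub_one_add_mirrorCone_add_one (k := k) hi.1 h hu
    simp (disch := omega) only [if_pos, if_neg]
    linarith
  · subst h
    obtain rfl | hkn := eq_or_lt_of_le hk.2
    · simp (disch := omega) only [if_pos, if_neg, mirrorCone_of_le_right] at *
      linarith
    · have := mirrorCone_sub_one_add_mirrorCone_add_one_of_succ_eq rfl hkn hu
      simp (disch := omega) only [if_pos, if_neg, mirrorCone_of_le_left, true_and]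
      linarith
  · have := cone_sub_one_add_cone_add_one_self hk.1 hk.2 hu
    obtain rfl | hkn := eq_or_lt_of_le hk.2
    · simp (disch := omega) only [if_pos, if_neg, mirrorCone_of_le_left, mirrorCone_of_le_right,
        and_self, if_true] at *
      linarith
    · simp (disch := omega) only [if_pos, if_neg, mirrorCone_of_le_left] at *
      linarith

def deltaCoeff (n : ℕ) (d : ℕ → ℚ) (i j : ℕ) (u : ℤ) : ℚ :=
  max (d i) (d j) *
    ∑ s ∈ Icc 1 (min i j),
      ((if u = |(i : ℤ) - (j : ℤ)| + 2 * (s : ℤ) - 1 then 1 else 0) +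
       (if max i j < n ∧ u = 2 * (n : ℤ) - i - j + 2 * (s : ℤ) - 1 then 1 else 0))

theorem deltaCoeff_eq (n : ℕ) (d : ℕ → ℚ) (i k : ℕ) (u : ℤ) :
    deltaCoeff n d i k u = max (d i) (d k) * foldedCone n i k u := by
  have hcone : (∑ s ∈ Icc 1 (min i k),
      if u = |(i : ℤ) - k| + 2 * (s : ℤ) - 1 then (1 : ℚ) else 0) = cone i k u := by
    rw [sum_Icc_ite_eq_add_two_mul_sub_one, cone]
    refine if_congr ?_ rfl rfl
    rcases abs_cases ((i : ℤ) - k) with ⟨h, _⟩ | ⟨h, _⟩ <;> rw [h] <;> push_cast <;> omega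
  have hmirror : (∑ s ∈ Icc 1 (min i k),
      if max i k < n ∧ u = 2 * (n : ℤ) - i - k + 2 * (s : ℤ) - 1 then (1 : ℚ) else 0) =
        mirrorCone n i k u := by
    by_cases hm : max i k < n
    · simp only [hm, true_and]
      rw [sum_Icc_ite_eq_add_two_mul_sub_one, mirrorCone]
      refine if_congr ?_ rfl rfl
      omega
    · simp only [hm, false_and, if_false, sum_const_zero]
      rw [mirrorCone, if_neg (by omega)]
  rw [deltaCoeff, sum_add_distrib, hcone, hmirror, foldedCone]

theorem deltaCoeff_zero_left (n : ℕ) (d : ℕ → ℚ) (k : ℕ) (u : ℤ) :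
    deltaCoeff n d 0 k u = 0 := by
  rw [deltaCoeff_eq, foldedCone_zero_left, mul_zero]

theorem deltaCoeff_cBmat_row {n i k : ℕ} {u : ℤ} (hi : i ∈ Icc 1 n) (hk : k ∈ Icc 1 n)
    (hu : u < 2 * n) :
    (deltaCoeff n (dBvec n) i k (u - 1) + deltaCoeff n (dBvec n) i k (u + 1)) / dBvec n i +
      ∑ j ∈ (Icc 1 n).erase i, (cBmat n i j : ℚ) / dBvec n j * deltaCoeff n (dBvec n) j k u =
      if i = k ∧ u = 0 then 1 else 0 := by
  rw [sum_erase_Icc_eq_of_tridiagonal hi _ (by rw [deltaCoeff_zero_left, mul_zero])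
    fun j _ h₁ h₂ h₃ => by rw [cBmat_eq_zero h₁ h₂ h₃, Int.cast_zero, zero_div, zero_mul]]
  simp only [deltaCoeff_eq]
  have hZ := foldedCone_sub_one_add_foldedCone_add_one hi hk hu
  rw [mem_Icc] at hi hk
  rcases (by omega : i + 1 < n ∨ i + 1 = n ∨ i = n) with h | rfl | rfl <;>
  rcases eq_or_lt_of_le hk.2 with rfl | hkn <;>
  simp (disch := omega) only [max_dBvec_of_ne, max_dBvec_self, cBmat_pred, cBmat_succ,
    if_pos, if_neg, true_and, and_self, if_true] at * <;>
  simp (disch := omega) only [dBvec_of_ne, dBvec_self] <;>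
  push_cast <;>
  linarith

theorem deltaCoeff_cCmat_row {n i k : ℕ} {u : ℤ} (hi : i ∈ Icc 1 n) (hk : k ∈ Icc 1 n)
    (hu : u < 2 * n) :
    (deltaCoeff n (dCvec n) i k (u - 1) + deltaCoeff n (dCvec n) i k (u + 1)) / dCvec n i +
      ∑ j ∈ (Icc 1 n).erase i, (cCmat n i j : ℚ) / dCvec n j * deltaCoeff n (dCvec n) j k u =
      if i = k ∧ u = 0 then 1 else 0 := by
  rw [sum_erase_Icc_eq_of_tridiagonal hi _ (by rw [deltaCoeff_zero_left, mul_zero])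
    fun j _ h₁ h₂ h₃ => by rw [cCmat_eq_zero h₁ h₂ h₃, Int.cast_zero, zero_div, zero_mul]]
  simp only [deltaCoeff_eq]
  have hZ := foldedCone_sub_one_add_foldedCone_add_one hi hk hu
  rw [mem_Icc] at hi hk
  rcases (by omega : i + 1 < n ∨ i + 1 = n ∨ i = n) with h | rfl | rfl <;>
  rcases eq_or_lt_of_le hk.2 with rfl | hkn <;>
  simp (disch := omega) only [max_dCvec_of_ne, max_dCvec_self, cCmat_pred, cCmat_succ,
    if_pos, if_neg, true_and, and_self, if_true] at * <;>
  simp (disch := omega) only [dCvec_of_ne, dCvec_self] <;>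
  push_cast <;>
  linarith

theorem stmt16_general (n : ℕ)
    (c : ℕ → ℕ → ℤ) (d : ℕ → ℚ)
    (hBC : (c = cBmat n ∧ d = dBvec n) ∨ (c = cCmat n ∧ d = dCvec n))
    (b : ℕ → ℕ → ℤ → ℚ)
    (hlow : ∃ N : ℤ, ∀ i j u, u < N → b i j u = 0)
    (h1 : ∀ i ∈ Finset.Icc 1 n, ∀ k ∈ Finset.Icc 1 n, ∀ u : ℤ,
      (b i k (u - 1) + b i k (u + 1)) / d i +
        ∑ j ∈ (Finset.Icc 1 n).erase i, ((c i j : ℚ) / d j) * b j k u =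
      if i = k ∧ u = 0 then 1 else 0) :
    ∀ i ∈ Finset.Icc 1 n, ∀ j ∈ Finset.Icc 1 n, ∀ u : ℤ, 1 ≤ u → u ≤ 2 * (n : ℤ) →
      b i j u = max (d i) (d j) *
        ∑ s ∈ Finset.Icc 1 (min i j),
          ((if u = |(i : ℤ) - (j : ℤ)| + 2 * (s : ℤ) - 1 then 1 else 0) +
           (if max i j < n ∧ u = 2 * (n : ℤ) - i - j + 2 * (s : ℤ) - 1 then 1 else 0)) := by
  intro i hi k hk u _ hu
  obtain ⟨N, hN⟩ := hlow
  have hd : ∀ i, d i ≠ 0 := by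
    rcases hBC with ⟨-, rfl⟩ | ⟨-, rfl⟩ <;> intro i <;> simp only [dBvec, dCvec] <;> split_ifs <;>
      norm_num
  have hrow : ∀ i ∈ Icc 1 n, ∀ u < 2 * (n : ℤ),
      (deltaCoeff n d i k (u - 1) + deltaCoeff n d i k (u + 1)) / d i +
        ∑ j ∈ (Icc 1 n).erase i, (c i j : ℚ) / d j * deltaCoeff n d j k u =
      if i = k ∧ u = 0 then 1 else 0 := by
    rcases hBC with ⟨rfl, rfl⟩ | ⟨rfl, rfl⟩
    · exact fun i hi u hu => deltaCoeff_cBmat_row hi hk hu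
    · exact fun i hi u hu => deltaCoeff_cCmat_row hi hk hu
  refine eq_of_recurrence (fun i _ => hd i) _ _ (fun i hi u _ => h1 i hi k hk u) hrow
    (N := min N 1) (fun i _ u hu => ?_) i hi u hu
  rw [hN i k u (by omega), deltaCoeff_eq, foldedCone_of_nonpos n i k (by omega), mul_zero]

/-- For types `Bₙ` and `Cₙ` (Coxeter number `h = 2n`), the polynomials
`δ̃ᵢⱼ(t) = ∑_{u=1}^{2n} b̃ᵢⱼ(u) tᵘ` obtained from the inverse of `B(t) = C_t(t)D⁻¹` are
given by `δ̃ᵢⱼ(t) = max(dᵢ,dⱼ) ∑_{s=1}^{min(i,j)} (t^{|i−j|+2s−1} +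
[max(i,j) < n] t^{2n−i−j+2s−1})`. -/
theorem stmt16 (n : ℕ) (hn : 2 ≤ n)
    (c : ℕ → ℕ → ℤ) (d : ℕ → ℚ)
    (hBC : (c = cBmat n ∧ d = dBvec n) ∨ (c = cCmat n ∧ d = dCvec n))
    (b : ℕ → ℕ → ℤ → ℚ)
    (hlow : ∃ N : ℤ, ∀ i j u, u < N → b i j u = 0)
    (h1 : ∀ i ∈ Finset.Icc 1 n, ∀ k ∈ Finset.Icc 1 n, ∀ u : ℤ,
      (b i k (u - 1) + b i k (u + 1)) / d i +
        ∑ j ∈ (Finset.Icc 1 n).erase i, ((c i j : ℚ) / d j) * b j k u =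
      if i = k ∧ u = 0 then 1 else 0)
    (h2 : ∀ i ∈ Finset.Icc 1 n, ∀ k ∈ Finset.Icc 1 n, ∀ u : ℤ,
      (b i k (u - 1) + b i k (u + 1)) / d k +
        ∑ j ∈ (Finset.Icc 1 n).erase k, b i j u * ((c j k : ℚ) / d k) =
      if i = k ∧ u = 0 then 1 else 0) :
    ∀ i ∈ Finset.Icc 1 n, ∀ j ∈ Finset.Icc 1 n, ∀ u : ℤ, 1 ≤ u → u ≤ 2 * (n : ℤ) →
      b i j u = max (d i) (d j) *
        ∑ s ∈ Finset.Icc 1 (min i j),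
          ((if u = |(i : ℤ) - (j : ℤ)| + 2 * (s : ℤ) - 1 then 1 else 0) +
           (if max i j < n ∧ u = 2 * (n : ℤ) - i - j + 2 * (s : ℤ) - 1 then 1 else 0)) :=
  stmt16_general n c d hBC b hlow h1
end

section
/- Let Q be a σ-fixed Dynkin quiver of type D_{n+1} (i.e. the height function satisfies ξ_n = ξ_{n+1}), and τ_Q its adapted Coxeter element, viewed as a signed permutation of {±1, ..., ±(n+1)}. Then τ_Q(n+1) = −(n+1) and τ_Q(−(n+1)) = n+1. -/
/-- The simple reflections of the Weyl group of type `D_{n+1}` acting on the coordinate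
space (0-based nodes `0, …, n`): node `k < n` swaps coordinates `k` and `k+1`; node `n`
sends `(v_{n−1}, v_n)` to `(−v_n, −v_{n−1})`. -/
noncomputable def sD (n k : ℕ) : Function.End (ℕ → ℝ) := fun v m =>
  if k < n then
    (if m = k then v (k + 1) else if m = k + 1 then v k else v m)
  else
    (if m = n - 1 then -v n else if m = n then -(v (n - 1)) else v m)

/-- Product of the simple reflections of type `D_{n+1}` along a word. -/
noncomputable def wprodD (n : ℕ) (w : List ℕ) : Function.End (ℕ → ℝ) :=
  (w.map (sD n)).prod

/-- Adjacency in the Dynkin diagram of type `D_{n+1}` (0-based nodes `0, …, n`): the path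
`0 − 1 − ⋯ − (n−1)` together with the extra node `n` attached to `n−2`. -/
def adjD (n a b : ℕ) : Prop :=
  ((a + 1 = b ∨ b + 1 = a) ∧ a ≤ n - 1 ∧ b ≤ n - 1) ∨
  (a = n - 2 ∧ b = n) ∨ (a = n ∧ b = n - 2)


/-!
Write `e_k` for the `k`-th basis vector (0-based, so `e_n` is the last one). The reflections
`s_k` with `k + 2 ≤ n` fix `e_n`, and those with `k + 3 ≤ n` also fix `e_{n-1}`, while `s_{n-1}`
and `s_n` exchange the lines `ℝ e_{n-1}` and `ℝ e_n`, with `s_{n-1} s_n = s_n s_{n-1} = -1` on their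
span. Since `ξ_{n-1} = ξ_n`, the arrows between `n-2` and the two end nodes point the same way,
so in an adapted word the letter `n-2` never occurs between the letters `n-1` and `n`. Reading
the word from the right, `e_n` is therefore only moved by those two letters, and ends at `-e_n`.
-/

namespace List

variable {α : Type*} [DecidableEq α]

theorem exists_eq_append_cons_append_cons_of_idxOf_lt {l : List α} {a b : α} (hl : l.Nodup)
    (hb : b ∈ l) (hab : l.idxOf a < l.idxOf b) :
    ∃ l₁ l₂ l₃, l = l₁ ++ a :: (l₂ ++ b :: l₃) ∧
      ∀ x ∈ l₂, l.idxOf a < l.idxOf x ∧ l.idxOf x < l.idxOf b := by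
  obtain ⟨s, l₃, rfl⟩ := append_of_mem hb
  have hbs : b ∉ s := by grind
  have has : a ∈ s := by
    rw [(prefix_append s _).mem_iff_idxOf_lt_length]
    simpa [idxOf_append_of_notMem hbs] using hab
  obtain ⟨l₁, l₂, rfl⟩ := append_of_mem has
  refine ⟨l₁, l₂, l₃, by simp, fun x hx => ?_⟩
  grind

end List

section

variable {n k i : ℕ} {c : ℝ}

theorem sD_single_of_lt (hk : k < n) (hik : i ≠ k) (hik' : i ≠ k + 1) :
    sD n k (Pi.single i c) = Pi.single i c := by
  funext m
  simp only [sD, Pi.single_apply, if_pos hk]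
  split_ifs <;> first | rfl | omega

theorem sD_sub_one_single_self (hn : 1 ≤ n) :
    sD n (n - 1) (Pi.single n c) = Pi.single (n - 1) c := by
  funext m
  simp only [sD, Pi.single_apply, if_pos (show n - 1 < n by omega)]
  split_ifs <;> first | rfl | omega

theorem sD_sub_one_single_sub_one (hn : 1 ≤ n) :
    sD n (n - 1) (Pi.single (n - 1) c) = Pi.single n c := by
  funext m
  simp only [sD, Pi.single_apply, if_pos (show n - 1 < n by omega)]
  split_ifs <;> first | rfl | omega

theorem sD_self_single_self (hn : 1 ≤ n) :
    sD n n (Pi.single n c) = Pi.single (n - 1) (-c) := by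
  funext m
  simp only [sD, Pi.single_apply, lt_irrefl, if_false]
  split_ifs <;> first | rfl | omega | simp

theorem sD_self_single_sub_one :
    sD n n (Pi.single (n - 1) c) = Pi.single n (-c) := by
  funext m
  simp only [sD, Pi.single_apply, lt_irrefl, if_false]
  split_ifs <;> first | rfl | omega | simp

theorem wprodD_cons (l : List ℕ) (v : ℕ → ℝ) : wprodD n (k :: l) v = sD n k (wprodD n l v) := by
  simp only [wprodD, List.map_cons, List.prod_cons]
  rfl

theorem wprodD_append (l₁ l₂ : List ℕ) (v : ℕ → ℝ) :
    wprodD n (l₁ ++ l₂) v = wprodD n l₁ (wprodD n l₂ v) := by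
  simp only [wprodD, List.map_append, List.prod_append]
  rfl

theorem wprodD_single_of_forall_lt {l : List ℕ} (hi : i ≤ n) (hl : ∀ k ∈ l, k + 1 < i) :
    wprodD n l (Pi.single i c) = Pi.single i c := by
  induction l with
  | nil => rfl
  | cons k l ih =>
    rw [wprodD_cons, ih fun k' hk' => hl k' (List.mem_cons_of_mem _ hk')]
    have := hl k List.mem_cons_self
    exact sD_single_of_lt (by omega) (by omega) (by omega)

theorem wprodD_single_eq_neg_of_eq_append {l₁ l₂ l₃ : List ℕ} {a b : ℕ} (hn : 1 ≤ n)
    (hab : a = n - 1 ∧ b = n ∨ a = n ∧ b = n - 1)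
    (hl₁ : ∀ k ∈ l₁, k + 1 < n) (hl₂ : ∀ k ∈ l₂, k + 1 < n - 1) (hl₃ : ∀ k ∈ l₃, k + 1 < n) :
    wprodD n (l₁ ++ a :: (l₂ ++ b :: l₃)) (Pi.single n c) = Pi.single n (-c) := by
  rw [wprodD_append, wprodD_cons, wprodD_append, wprodD_cons,
    wprodD_single_of_forall_lt le_rfl hl₃]
  rcases hab with ⟨rfl, rfl⟩ | ⟨rfl, rfl⟩
  · rw [sD_self_single_self hn, wprodD_single_of_forall_lt (by omega) hl₂,
      sD_sub_one_single_sub_one hn, wprodD_single_of_forall_lt le_rfl hl₁]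
  · rw [sD_sub_one_single_self hn, wprodD_single_of_forall_lt (by omega) hl₂,
      sD_self_single_sub_one, wprodD_single_of_forall_lt le_rfl hl₁]

theorem wprodD_single_eq_neg_of_idxOf_lt {w : List ℕ} (hn : 2 ≤ n) (hnd : w.Nodup)
    (hall : ∀ k, k ∈ w ↔ k ≤ n) {a b : ℕ} (hab : a = n - 1 ∧ b = n ∨ a = n ∧ b = n - 1)
    (hlt : w.idxOf a < w.idxOf b)
    (hsep : ¬ (w.idxOf a < w.idxOf (n - 2) ∧ w.idxOf (n - 2) < w.idxOf b)) :
    wprodD n w (Pi.single n c) = Pi.single n (-c) := by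
  have hb : b ∈ w := (hall b).2 (by omega)
  obtain ⟨l₁, l₂, l₃, rfl, hl₂⟩ := List.exists_eq_append_cons_append_cons_of_idxOf_lt hnd hb hlt
  have hmem : ∀ k, k ∈ l₁ ∨ k ∈ l₂ ∨ k ∈ l₃ → k ≤ n ∧ k ≠ a ∧ k ≠ b := by
    intro k hk
    refine ⟨(hall k).1 (by grind), ?_, ?_⟩ <;> grind
  refine wprodD_single_eq_neg_of_eq_append (by omega) hab ?_ ?_ ?_
  · intro k hk
    have := hmem k (.inl hk)
    omega
  · intro k hk
    have := hmem k (.inr (.inl hk))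
    have hk2 : k ≠ n - 2 := by rintro rfl; exact hsep (hl₂ _ hk)
    omega
  · intro k hk
    have := hmem k (.inr (.inr hk))
    omega

theorem wprodD_single_eq_neg {w : List ℕ} (hn : 2 ≤ n) (hnd : w.Nodup)
    (hall : ∀ k, k ∈ w ↔ k ≤ n)
    (hside : w.idxOf (n - 2) < w.idxOf (n - 1) ↔ w.idxOf (n - 2) < w.idxOf n) :
    wprodD n w (Pi.single n c) = Pi.single n (-c) := by
  have hne : w.idxOf (n - 1) ≠ w.idxOf n := by
    rw [Ne, List.idxOf_inj ((hall _).2 (by omega))]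
    omega
  rcases lt_or_gt_of_ne hne with hlt | hlt
  · exact wprodD_single_eq_neg_of_idxOf_lt hn hnd hall (.inl ⟨rfl, rfl⟩) hlt (by omega)
  · exact wprodD_single_eq_neg_of_idxOf_lt hn hnd hall (.inr ⟨rfl, rfl⟩) hlt (by omega)

theorem idxOf_sub_two_lt_iff_of_adapted (hn : 2 ≤ n) {ξ : ℕ → ℤ}
    (hheight : ∀ a b, adjD n a b → ξ a = ξ b + 1 ∨ ξ b = ξ a + 1) (hfix : ξ (n - 1) = ξ n)
    {w : List ℕ} (hadapt : ∀ a b, adjD n a b → ξ a = ξ b + 1 → w.idxOf a < w.idxOf b) :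
    w.idxOf (n - 2) < w.idxOf (n - 1) ↔ w.idxOf (n - 2) < w.idxOf n := by
  have hadj : adjD n (n - 2) (n - 1) := .inl ⟨.inl (by omega), by omega, by omega⟩
  rcases hheight _ _ hadj with h | h
  · exact iff_of_true (hadapt _ _ hadj h) (hadapt _ _ (.inr (.inl ⟨rfl, rfl⟩)) (hfix ▸ h))
  · have hadj' : adjD n (n - 1) (n - 2) := .inl ⟨.inr (by omega), by omega, by omega⟩
    exact iff_of_false (hadapt _ _ hadj' h).not_gt
      (hadapt _ _ (.inr (.inr ⟨rfl, rfl⟩)) (hfix ▸ h)).not_gt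

end

/-- For a `σ`-fixed Dynkin quiver `Q` of type `D_{n+1}` (i.e. `ξ_{n−1} = ξ_n` for the
height function, 0-based), the adapted Coxeter element `τ_Q`, viewed as a signed
permutation, satisfies `τ_Q(n+1) = −(n+1)` and `τ_Q(−(n+1)) = n+1`, i.e. it sends the
last basis vector to its negative and conversely. -/
theorem stmt18 (n : ℕ) (hn : 2 ≤ n) (ξ : ℕ → ℤ)
    (hheight : ∀ a b, adjD n a b → ξ a = ξ b + 1 ∨ ξ b = ξ a + 1)
    (hfix : ξ (n - 1) = ξ n)
    (w : List ℕ) (hnd : w.Nodup) (hall : ∀ k, k ∈ w ↔ k ≤ n)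
    (hadapt : ∀ a b, adjD n a b → ξ a = ξ b + 1 → w.idxOf a < w.idxOf b) :
    (wprodD n w (fun m => if m = n then (1 : ℝ) else 0) =
      fun m => if m = n then (-1 : ℝ) else 0) ∧
    (wprodD n w (fun m => if m = n then (-1 : ℝ) else 0) =
      fun m => if m = n then (1 : ℝ) else 0) := by
  have key (c : ℝ) : wprodD n w (Pi.single n c) = Pi.single n (-c) :=
    wprodD_single_eq_neg hn hnd hall (idxOf_sub_two_lt_iff_of_adapted hn hheight hfix hadapt)
  simp only [← Pi.single_apply]
  exact ⟨key 1, by simpa using key (-1)⟩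
end
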